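/- Let C be an m×n Cauchon diagram with associated permutation v, let k ∈ {1,...,n}, put I_k = v({1,...,k}) (the image of {1,...,k} under v), and let (x_1,y_1),...,(x_t,y_t) be the chain rooted at box k on the south-east border. Then {x_1,...,x_t} = p_1(I_k) and {y_1,...,y_t} = {m+1,...,m+k} \ p_2(I_k). -/

import Mathlib

/-- The transposition `s_{a+b-m-1} = (a+b-m-1, a+b-m)` assigned to the grid square `(a,b)`. -/
def sqPerm (m : ℕ) (p : ℕ × ℕ) : Equiv.Perm ℕ :=
  Equiv.swap (p.1 + p.2 - m - 1) (p.1 + p.2 - m)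

/-- The reading word of the set of grid squares satisfying `P`: rows are read from the
top (`a = m`) down to the bottom (`a = 1`), and within each row columns are read from the
left (`b = m+1`) to the right (`b = m+n`); factors are multiplied so that the last factor
in reading order is applied first. -/
def readingWord (m n : ℕ) (P : ℕ × ℕ → Bool) : Equiv.Perm ℕ :=
  ((List.range m).map fun i =>
    (((List.range n).map fun j =>
      if P (m - i, m + 1 + j) then sqPerm m (m - i, m + 1 + j) else 1)).prod).prod

/-- `(a,b)` is a square of the `m × n` grid: `1 ≤ a ≤ m`, `m+1 ≤ b ≤ m+n`. -/
def InGrid (m n : ℕ) (p : ℕ × ℕ) : Prop :=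
  1 ≤ p.1 ∧ p.1 ≤ m ∧ m + 1 ≤ p.2 ∧ p.2 ≤ m + n

/-- A colouring (`true` = black, `false` = white) is a Cauchon diagram if for every black
square `(a,b)`, either every square `(a,b')` with `b' < b` is black, or every square
`(a',b)` with `a' > a` is black. -/
def IsCauchon (m n : ℕ) (col : ℕ × ℕ → Bool) : Prop :=
  ∀ a b, InGrid m n (a, b) → col (a, b) = true →
    (∀ b', m + 1 ≤ b' → b' < b → col (a, b') = true) ∨
    (∀ a', a < a' → a' ≤ m → col (a', b) = true)

/-- The permutation associated to a colouring: the reading word of its set of black squares. -/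
def assocPerm (m n : ℕ) (col : ℕ × ℕ → Bool) : Equiv.Perm ℕ :=
  readingWord m n col

/-- `v_{x,y}`: the reading word of the black squares `(a,b)` with `a ≥ x` and `b ≤ y`. -/
def vAt (m n : ℕ) (col : ℕ × ℕ → Bool) (x y : ℕ) : Equiv.Perm ℕ :=
  readingWord m n fun p => col p && decide (x ≤ p.1) && decide (p.2 ≤ y)

/-- `w_{x,y}`: the reading word of all grid squares `(a,b)` with `a ≥ x` and `b ≤ y`. -/
def wAt (m n x y : ℕ) : Equiv.Perm ℕ :=
  readingWord m n fun p => decide (x ≤ p.1) && decide (p.2 ≤ y)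

/-- Box `k` on the south-east border: `(1, m+k)` if `k ≤ n`, and `(k-n+1, m+n)` otherwise. -/
def boxSE (m n k : ℕ) : ℕ × ℕ :=
  if k ≤ n then (1, m + k) else (k - n + 1, m + n)

/-- `(X 1, Y 1), ..., (X t, Y t)` is the chain rooted at the square `(x,y)` of the colouring
`col` (with `t = 0` for the empty chain). -/
def IsChainRootedAt (m n : ℕ) (col : ℕ × ℕ → Bool) (x y : ℕ)
    (t : ℕ) (X Y : ℕ → ℕ) : Prop :=
  -- every member of the chain is a white square of the grid
  (∀ i, 1 ≤ i → i ≤ t → InGrid m n (X i, Y i) ∧ col (X i, Y i) = false) ∧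
  -- if `(x,y)` is white, the chain starts at `(x,y)`
  (col (x, y) = false → 1 ≤ t ∧ X 1 = x ∧ Y 1 = y) ∧
  -- if `(x,y)` is black and the chain is nonempty, it starts at the white square
  -- weakly north-west of `(x,y)` nearest to it
  (col (x, y) = true → 1 ≤ t →
    x ≤ X 1 ∧ Y 1 ≤ y ∧
      ∀ a b, InGrid m n (a, b) → col (a, b) = false → x ≤ a → b ≤ y →
        X 1 ≤ a ∧ b ≤ Y 1) ∧
  -- the chain is empty only when there is no white square weakly north-west of `(x,y)`
  (t = 0 → ∀ a b, InGrid m n (a, b) → col (a, b) = false → x ≤ a → b ≤ y → False) ∧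
  -- inductive step: each next member is the nearest white square strictly north-west
  (∀ i, 1 ≤ i → i < t →
    X i < X (i + 1) ∧ Y (i + 1) < Y i ∧
      ∀ a b, InGrid m n (a, b) → col (a, b) = false → X i < a → b < Y i →
        X (i + 1) ≤ a ∧ b ≤ Y (i + 1)) ∧
  -- termination: no white square strictly north-west of the last member
  (1 ≤ t → ∀ a b, InGrid m n (a, b) → col (a, b) = false → X t < a → b < Y t → False)


/-!
Induction on the number of rows, deleting the top row. The reading word factors as
`v = T * v'`, with `T` the word of the top row and `v'` that of the lower rows, and the chain of
the lower rows is the old chain without its top-row member, if it has one. The invariant is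
`v({1,…,k}) = {X i} ∪ ({m+1,…,m+k} \ {Y i})`. The word `T` fixes every `x ≤ m` and sends
`a` to `a + 1` when the top-row square `(m+1, a+1)` is black. If the chain ends in the top row
at `(m+1, y)`, its extremality makes that square black for every `a ≥ y` of the lower invariant
set, while `T` permutes the block `{m+1,…,y-1}` because `(m+1, y)` is white; if the chain misses
the top row, the same holds with `y = m+1`.
-/

open Finset Equiv

def rowWord (c : ℕ) (B : ℕ → Bool) (len : ℕ) : Perm ℕ :=
  ((List.range len).map fun j => if B j then swap (c + j) (c + j + 1) else 1).prod

section rowWord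

variable (c : ℕ) (B : ℕ → Bool)

lemma rowWord_succ (len : ℕ) :
    rowWord c B (len + 1) =
      rowWord c B len * if B len then swap (c + len) (c + len + 1) else 1 := by
  simp [rowWord, List.range_succ]

variable {c B}

lemma rowWord_succ_apply_of_ne {len x : ℕ} (h1 : x ≠ c + len) (h2 : x ≠ c + len + 1) :
    rowWord c B (len + 1) x = rowWord c B len x := by
  rw [rowWord_succ, Perm.mul_apply]
  split
  · rw [swap_apply_of_ne_of_ne h1 h2]
  · rfl

lemma rowWord_apply_of_lt_or_lt {len x : ℕ} (hx : x < c ∨ c + len < x) :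
    rowWord c B len x = x := by
  induction len with
  | zero => rfl
  | succ len ih => rw [rowWord_succ_apply_of_ne (by omega) (by omega), ih (by omega)]

lemma rowWord_apply_of_black {len x : ℕ} (hcx : c ≤ x) (hx : x < c + len)
    (hB : B (x - c) = true) : rowWord c B len x = x + 1 := by
  induction len with
  | zero => omega
  | succ len ih =>
    obtain hlt | rfl : x < c + len ∨ x = c + len := by omega
    · rw [rowWord_succ_apply_of_ne (by omega) (by omega), ih hlt]
    · rw [Nat.add_sub_cancel_left] at hB
      rw [rowWord_succ, Perm.mul_apply, if_pos hB, swap_apply_left,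
        rowWord_apply_of_lt_or_lt (by omega)]

lemma rowWord_mapsTo_Icc {d : ℕ} (hB : B (d - c) = false) (len : ℕ) :
    Set.MapsTo (rowWord c B len) (Set.Icc c d) (Set.Icc c d) := by
  induction len with
  | zero => exact Set.mapsTo_id _
  | succ len ih =>
    rw [rowWord_succ, Perm.coe_mul]
    refine ih.comp fun x hx => ?_
    split
    · next hlen =>
      have hd : c + len ≠ d := by rintro rfl; simp_all
      simp only [Set.mem_Icc] at hx ⊢
      rcases eq_or_ne x (c + len) with rfl | h1
      · rw [swap_apply_left]; omega
      rcases eq_or_ne x (c + len + 1) with rfl | h2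
      · rw [swap_apply_right]; omega
      rw [swap_apply_of_ne_of_ne h1 h2]; exact hx
    · exact hx

end rowWord

def topRowWord (m n : ℕ) (col : ℕ × ℕ → Bool) : Perm ℕ :=
  rowWord (m + 1) (fun j => col (m + 1, m + 2 + j)) n

section topRowWord

variable {m n : ℕ} {col : ℕ × ℕ → Bool}

lemma topRowWord_apply_of_le {x : ℕ} (hx : x ≤ m) : topRowWord m n col x = x :=
  rowWord_apply_of_lt_or_lt (Or.inl (by omega))

lemma topRowWord_apply_of_black {a : ℕ} (ha : m + 1 ≤ a) (han : a ≤ m + n)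
    (hB : col (m + 1, a + 1) = true) : topRowWord m n col a = a + 1 :=
  rowWord_apply_of_black ha (by omega) (by rwa [show m + 2 + (a - (m + 1)) = a + 1 by omega])

lemma topRowWord_image_Icc {y : ℕ} (hy : m + 2 ≤ y) (hw : col (m + 1, y) = false) :
    (Icc (m + 1) (y - 1)).image (topRowWord m n col) = Icc (m + 1) (y - 1) := by
  have hB : col (m + 1, m + 2 + (y - 1 - (m + 1))) = false := by
    rwa [show m + 2 + (y - 1 - (m + 1)) = y by omega]
  refine eq_of_subset_of_card_le (image_subset_iff.2 fun x hx => ?_)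
    (card_image_of_injective _ (Equiv.injective _)).ge
  exact mem_Icc.2 (rowWord_mapsTo_Icc hB n (mem_Icc.1 hx))

end topRowWord

/-- The lower `m` rows of a colouring of the `(m+1)`-row grid, in the coordinates of the
`m`-row grid, whose columns are numbered from `m+1` instead of `m+2`. -/
def lowerRows (col : ℕ × ℕ → Bool) : ℕ × ℕ → Bool := fun p => col (p.1, p.2 + 1)

lemma sqPerm_succ_add_one (m a b : ℕ) : sqPerm (m + 1) (a, b + 1) = sqPerm m (a, b) := by
  simp only [sqPerm]
  congr 1 <;> omega

lemma readingWord_zero (n : ℕ) (P : ℕ × ℕ → Bool) : readingWord 0 n P = 1 := rfl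

lemma readingWord_succ (m n : ℕ) (P : ℕ × ℕ → Bool) :
    readingWord (m + 1) n P =
      topRowWord m n P * readingWord m n (lowerRows P) := by
  unfold readingWord topRowWord rowWord
  rw [List.range_succ_eq_map, List.map_cons, List.prod_cons, List.map_map]
  congr 1
  · refine congrArg List.prod (List.map_congr_left fun j _ => ?_)
    have e1 : m + 1 + 1 + j = m + 2 + j := by omega
    have e2 : m + 1 + (m + 2 + j) - (m + 1) = m + 1 + j + 1 := by omega
    simp only [Nat.sub_zero, sqPerm, e1, e2, Nat.add_sub_cancel]
  · refine congrArg List.prod (List.map_congr_left fun i _ => ?_)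
    refine congrArg List.prod (List.map_congr_left fun j _ => ?_)
    have e1 : m + 1 - (i + 1) = m - i := by omega
    have e2 : m + 1 + 1 + j = m + 1 + j + 1 := by omega
    simp only [lowerRows, e1, e2, sqPerm_succ_add_one]
    rfl

lemma image_union_Icc_sdiff {T : Perm ℕ} {m k y : ℕ} {Xs Ys : Finset ℕ}
    (hy : m + 1 ≤ y) (hyk : y ≤ m + k + 1) (hX : ∀ x ∈ Xs, T x = x)
    (hJ : (Icc (m + 1) (y - 1)).image T = Icc (m + 1) (y - 1))
    (hYs : ∀ z ∈ Ys, y ≤ z) (hup : ∀ a, y ≤ a → a ≤ m + k → a ∉ Ys → T a = a + 1) :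
    (Xs ∪ (Icc (m + 1) (m + k) \ Ys)).image T =
      Xs ∪ Icc (m + 1) (y - 1) ∪ (Icc (y + 1) (m + k + 1) \ Ys.image (· + 1)) := by
  have hsplit : Icc (m + 1) (m + k) \ Ys = Icc (m + 1) (y - 1) ∪ (Icc y (m + k) \ Ys) := by
    ext z
    have := hYs z
    simp only [mem_sdiff, mem_union, mem_Icc]
    grind
  have hXs : Xs.image T = Xs := (image_congr fun x hx => hX x hx).trans image_id'
  have hshift : (Icc y (m + k) \ Ys).image T = (Icc y (m + k) \ Ys).image (· + 1) :=
    image_congr fun a ha => by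
      simp only [coe_sdiff, coe_Icc, Set.mem_sdiff, Set.mem_Icc, mem_coe] at ha
      exact hup a ha.1.1 ha.1.2 ha.2
  rw [hsplit, image_union, image_union, hXs, hJ, hshift, image_sdiff _ _ (add_left_injective 1),
    image_add_right_Icc, union_assoc]


/-- The chain rooted at the bottom square `(1, y)`, with the two cases for the colour of the root
merged into `first`. -/
structure IsBottomChain (m n : ℕ) (col : ℕ × ℕ → Bool) (y t : ℕ) (X Y : ℕ → ℕ) : Prop where
  mem : ∀ i, 1 ≤ i → i ≤ t → InGrid m n (X i, Y i) ∧ col (X i, Y i) = false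
  first : ∀ a b, InGrid m n (a, b) → col (a, b) = false → b ≤ y → 1 ≤ t ∧ X 1 ≤ a ∧ b ≤ Y 1
  first_le : 1 ≤ t → Y 1 ≤ y
  step : ∀ i, 1 ≤ i → i < t → X i < X (i + 1) ∧ Y (i + 1) < Y i ∧
    ∀ a b, InGrid m n (a, b) → col (a, b) = false → X i < a → b < Y i →
      X (i + 1) ≤ a ∧ b ≤ Y (i + 1)
  last : 1 ≤ t → ∀ a b, InGrid m n (a, b) → col (a, b) = false → X t < a → b < Y t → False

namespace IsBottomChain

variable {m n : ℕ} {col : ℕ × ℕ → Bool} {y k t : ℕ} {X Y : ℕ → ℕ}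

theorem _root_.IsChainRootedAt.isBottomChain (h : IsChainRootedAt m n col 1 y t X Y) :
    IsBottomChain m n col y t X Y := by
  obtain ⟨hmem, hwhite, hblack, hempty, hstep, hlast⟩ := h
  refine ⟨hmem, fun a b hab hw hb => ?_, fun ht => ?_, hstep, hlast⟩
  · cases hroot : col (1, y)
    · obtain ⟨ht, hX, hY⟩ := hwhite hroot
      exact ⟨ht, by have := hab.1; omega, by omega⟩
    · have ht : 1 ≤ t := Nat.one_le_iff_ne_zero.2 fun h0 => hempty h0 a b hab hw hab.1 hb
      exact ⟨ht, (hblack hroot ht).2.2 a b hab hw hab.1 hb⟩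
  · cases hroot : col (1, y)
    · exact (hwhite hroot).2.2.le
    · exact (hblack hroot ht).2.1

theorem lt_of_lt (h : IsBottomChain m n col y t X Y) {i j : ℕ} (hi : 1 ≤ i) (hij : i < j)
    (hj : j ≤ t) : X i < X j ∧ Y j < Y i := by
  induction j, hij using Nat.le_induction with
  | base => exact ⟨(h.step i hi hj).1, (h.step i hi hj).2.1⟩
  | succ j hij ih =>
    have := h.step j (by omega) hj
    have := ih (by omega)
    omega

theorem Y_le (h : IsBottomChain m n col y t X Y) {i : ℕ} (hi : 1 ≤ i) (hit : i ≤ t) :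
    Y i ≤ y := by
  rcases hi.eq_or_lt with rfl | h1
  · exact h.first_le hit
  · exact ((h.lt_of_lt le_rfl h1 hit).2.trans_le (h.first_le (by omega))).le

theorem exists_of_white (h : IsBottomChain m n col y t X Y) {a b : ℕ}
    (hab : InGrid m n (a, b)) (hw : col (a, b) = false) (hb : b ≤ y) :
    ∃ i, 1 ≤ i ∧ i ≤ t ∧ (Y i = b ∨ b < Y i ∧ a ≤ X i) := by
  by_contra! hne
  obtain ⟨ht, -, hb1⟩ := h.first a b hab hw hb
  have hNW : ∀ i, 1 ≤ i → i ≤ t → b < Y i ∧ X i < a := by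
    intro i hi
    induction i, hi using Nat.le_induction with
    | base =>
      intro ht
      have := hne 1 le_rfl ht
      omega
    | succ i hi ih =>
      intro hit
      have hbY := ((h.step i hi hit).2.2 a b hab hw (ih (by omega)).2 (ih (by omega)).1).2
      have := hne (i + 1) (by omega) hit
      omega
  exact h.last ht a b hab hw (hNW t ht le_rfl).2 (hNW t ht le_rfl).1

theorem exists_of_white_top (h : IsBottomChain m n col y t X Y) {b : ℕ} (hm : 1 ≤ m)
    (hb : m + 1 ≤ b) (hby : b ≤ y) (hyn : y ≤ m + n) (hw : col (m, b) = false) :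
    (∃ i, 1 ≤ i ∧ i ≤ t ∧ Y i = b) ∨ (1 ≤ t ∧ X t = m ∧ b < Y t) := by
  obtain ⟨i, hi, hit, hYi | ⟨hbY, hXi⟩⟩ :=
    h.exists_of_white ⟨hm, le_rfl, hb, by omega⟩ hw hby
  · exact Or.inl ⟨i, hi, hit, hYi⟩
  · have hXi_le := (h.mem i hi hit).1.2.1
    obtain rfl : i = t := by
      by_contra hne
      have := h.lt_of_lt hi (lt_of_le_of_ne hit hne) le_rfl
      have := (h.mem t (by omega) le_rfl).1.2.1
      omega
    exact Or.inr ⟨hi, by omega, hbY⟩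

theorem lowerRows (h : IsBottomChain (m + 1) n col (y + 1) t X Y) {t' : ℕ} (ht' : t' ≤ t)
    (hX : ∀ i, 1 ≤ i → i ≤ t' → X i ≤ m) (htop : t' < t → X (t' + 1) = m + 1) :
    IsBottomChain m n (_root_.lowerRows col) y t' X (fun i => Y i - 1) := by
  have hgrid : ∀ a b, InGrid m n (a, b) → InGrid (m + 1) n (a, b + 1) := by
    intro a b hab
    obtain ⟨h1, h2, h3, h4⟩ := hab
    exact ⟨h1, by omega, by omega, by omega⟩
  have hY : ∀ i, 1 ≤ i → i ≤ t → m + 2 ≤ Y i := fun i hi hit => (h.mem i hi hit).1.2.2.1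
  refine ⟨fun i hi hit => ?_, fun a b hab hw hb => ?_, fun ht => ?_, fun i hi hit => ?_,
    fun ht a b hab hw ha hb => ?_⟩
  · obtain ⟨⟨h1, -, -, h4⟩, hw⟩ := h.mem i hi (hit.trans ht')
    have := hY i hi (hit.trans ht')
    refine ⟨⟨h1, hX i hi hit, by omega, by omega⟩, ?_⟩
    simpa only [_root_.lowerRows, Nat.sub_add_cancel (by omega : 1 ≤ Y i)] using hw
  · obtain ⟨ht, hXa, hbY⟩ := h.first a (b + 1) (hgrid a b hab) hw (by omega)
    refine ⟨Nat.one_le_iff_ne_zero.2 fun ht0 => ?_, hXa, by omega⟩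
    have hX1 : X 1 = m + 1 := by simpa [ht0] using htop (by omega)
    have := hab.2.1
    omega
  · have := h.first_le (by omega)
    omega
  · obtain ⟨hXlt, hYlt, hnext⟩ := h.step i hi (by omega)
    have := hY (i + 1) (by omega) (by omega)
    refine ⟨hXlt, by omega, fun a b hab hw ha hb => ?_⟩
    have := hnext a (b + 1) (hgrid a b hab) hw ha (by omega)
    omega
  · rcases ht'.eq_or_lt with rfl | hlt
    · exact h.last ht a (b + 1) (hgrid a b hab) hw ha (by omega)
    · have := (h.step t' ht hlt).2.2 a (b + 1) (hgrid a b hab) hw ha (by omega)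
      have := htop hlt
      have := hab.2.1
      omega

theorem image_sub_one_add_one (h : IsBottomChain (m + 1) n col (m + k + 1) t X Y) {s : ℕ}
    (hs : s ≤ t) : ((Icc 1 s).image fun i => Y i - 1).image (· + 1) = (Icc 1 s).image Y := by
  rw [image_image]
  refine image_congr fun i hi => ?_
  rw [coe_Icc, Set.mem_Icc] at hi
  have := (h.mem i hi.1 (hi.2.trans hs)).1.2.2.1
  simp only [Function.comp_apply]
  omega

theorem image_topRowWord_of_le (h : IsBottomChain (m + 1) n col (m + k + 1) t X Y)
    (hkn : k ≤ n) (hbelow : ∀ i, 1 ≤ i → i ≤ t → X i ≤ m) :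
    ((Icc 1 t).image X ∪ (Icc (m + 1) (m + k) \ (Icc 1 t).image fun i => Y i - 1)).image
        (topRowWord m n col) =
      (Icc 1 t).image X ∪ (Icc (m + 1 + 1) (m + 1 + k) \ (Icc 1 t).image Y) := by
  rw [image_union_Icc_sdiff (y := m + 1) le_rfl (by omega) ?fix (by simp) ?above ?black,
    h.image_sub_one_add_one le_rfl, Icc_eq_empty_of_lt (by omega : m + 1 - 1 < m + 1),
    union_empty, show m + k + 1 = m + 1 + k by omega]
  case fix =>
    refine forall_mem_image.2 fun i hi => ?_
    exact topRowWord_apply_of_le (hbelow i (mem_Icc.1 hi).1 (mem_Icc.1 hi).2)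
  case above =>
    refine forall_mem_image.2 fun i hi => ?_
    have := (h.mem i (mem_Icc.1 hi).1 (mem_Icc.1 hi).2).1.2.2.1
    omega
  case black =>
    intro a ha hak haY
    cases hB : col (m + 1, a + 1)
    · exfalso
      rcases h.exists_of_white_top (b := a + 1) (by omega) (by omega) (by omega) (by omega) hB
        with ⟨i, hi, hit, hYi⟩ | ⟨ht, hXt, -⟩
      · exact haY (mem_image.2 ⟨i, mem_Icc.2 ⟨hi, hit⟩, by omega⟩)
      · have := hbelow t ht le_rfl
        omega
    · exact topRowWord_apply_of_black ha (by omega) hB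

theorem image_topRowWord_of_top (h : IsBottomChain (m + 1) n col (m + k + 1) (t + 1) X Y)
    (hkn : k ≤ n) (htop : X (t + 1) = m + 1) :
    ((Icc 1 t).image X ∪ (Icc (m + 1) (m + k) \ (Icc 1 t).image fun i => Y i - 1)).image
        (topRowWord m n col) =
      (Icc 1 (t + 1)).image X ∪ (Icc (m + 1 + 1) (m + 1 + k) \ (Icc 1 (t + 1)).image Y) := by
  obtain ⟨⟨-, -, hYt, -⟩, hwhite⟩ := h.mem (t + 1) (by omega) le_rfl
  rw [htop] at hwhite
  have hYtk := h.Y_le (by omega) le_rfl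
  have hbefore : ∀ i ∈ Icc 1 t, X i < X (t + 1) ∧ Y (t + 1) < Y i := fun i hi =>
    h.lt_of_lt (mem_Icc.1 hi).1 (Nat.lt_add_one_of_le (mem_Icc.1 hi).2) le_rfl
  have hX : ∀ z ∈ (Icc 1 t).image X, z ≤ m := forall_mem_image.2 fun i hi => by
    have := (hbefore i hi).1
    omega
  have hY : ∀ z ∈ (Icc 1 t).image Y, Y (t + 1) < z :=
    forall_mem_image.2 fun i hi => (hbefore i hi).2
  rw [image_union_Icc_sdiff (y := Y (t + 1)) (by omega) (by omega) ?fix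
    (topRowWord_image_Icc hYt hwhite) ?above ?black, h.image_sub_one_add_one (by omega),
    ← insert_Icc_right_eq_Icc_add_one (by omega : 1 ≤ t + 1), image_insert, image_insert, htop]
  case fix => exact fun x hx => topRowWord_apply_of_le (hX x hx)
  case above =>
    refine forall_mem_image.2 fun i hi => ?_
    have := hY (Y i) (mem_image_of_mem Y hi)
    omega
  case black =>
    intro a ha hak haY
    cases hB : col (m + 1, a + 1)
    · exfalso
      rcases h.exists_of_white_top (b := a + 1) (by omega) (by omega) (by omega) (by omega) hB
        with ⟨i, hi, hit, hYi⟩ | ⟨-, -, hlt⟩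
      · obtain hit | rfl : i ≤ t ∨ i = t + 1 := by omega
        · exact haY (mem_image.2 ⟨i, mem_Icc.2 ⟨hi, hit⟩, by omega⟩)
        · omega
      · omega
    · exact topRowWord_apply_of_black (by omega) (by omega) hB
  ext z
  have := hX z
  have := hY z
  simp only [mem_union, mem_insert, mem_sdiff, mem_Icc]
  grind

end IsBottomChain

theorem image_readingWord_Icc {n k : ℕ} (hkn : k ≤ n) (m : ℕ) {col : ℕ × ℕ → Bool} {t : ℕ}
    {X Y : ℕ → ℕ} (h : IsBottomChain m n col (m + k) t X Y) :
    (Icc 1 k).image (readingWord m n col) =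
      (Icc 1 t).image X ∪ (Icc (m + 1) (m + k) \ (Icc 1 t).image Y) := by
  induction m generalizing col t X Y with
  | zero =>
    obtain rfl : t = 0 := by
      by_contra ht
      obtain ⟨h1, h2, -, -⟩ := (h.mem 1 le_rfl (by omega)).1
      omega
    simp [readingWord_zero]
  | succ m ih =>
    rw [show m + 1 + k = m + k + 1 by omega] at h
    rw [readingWord_succ, Perm.coe_mul, ← image_image]
    by_cases htop : 1 ≤ t ∧ X t = m + 1
    · obtain ⟨t, rfl⟩ : ∃ t', t = t' + 1 := ⟨t - 1, by omega⟩
      have hbelow : ∀ i, 1 ≤ i → i ≤ t → X i ≤ m := fun i hi hit => by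
        have := h.lt_of_lt hi (by omega : i < t + 1) le_rfl
        omega
      rw [ih (h.lowerRows (by omega) hbelow fun _ => htop.2)]
      exact h.image_topRowWord_of_top hkn htop.2
    · have hbelow : ∀ i, 1 ≤ i → i ≤ t → X i ≤ m := fun i hi hit => by
        have := (h.mem t (by omega) le_rfl).1.2.1
        rcases hit.eq_or_lt with rfl | hlt
        · omega
        · have := (h.lt_of_lt hi hlt le_rfl).1
          omega
      rw [ih (h.lowerRows le_rfl hbelow (by omega))]
      exact h.image_topRowWord_of_le hkn hbelow

lemma eq_inter_Icc_and_eq_Icc_sdiff {m n k : ℕ} (hkn : k ≤ n) {S Xs Ys : Finset ℕ}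
    (hXs : Xs ⊆ Icc 1 m) (hYs : Ys ⊆ Icc (m + 1) (m + k))
    (hS : S = Xs ∪ (Icc (m + 1) (m + k) \ Ys)) :
    Xs = S ∩ Icc 1 m ∧ Ys = Icc (m + 1) (m + k) \ (S ∩ Icc (m + 1) (m + n)) := by
  subst hS
  constructor <;> ext z <;> have := @hXs z <;> have := @hYs z <;>
    simp only [mem_union, mem_inter, mem_sdiff, mem_Icc] at * <;> grind

theorem chain_at_boxSE_rows_cols_low_general
    (m n : ℕ)
    (col : ℕ × ℕ → Bool)
    (k : ℕ) (hkn : k ≤ n)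
    (t : ℕ) (X Y : ℕ → ℕ)
    (hchain : IsChainRootedAt m n col (boxSE m n k).1 (boxSE m n k).2 t X Y) :
    Finset.image X (Finset.Icc 1 t) =
      Finset.image (fun j => assocPerm m n col j) (Finset.Icc 1 k) ∩ Finset.Icc 1 m ∧
    Finset.image Y (Finset.Icc 1 t) =
      Finset.Icc (m + 1) (m + k) \
        (Finset.image (fun j => assocPerm m n col j) (Finset.Icc 1 k) ∩
          Finset.Icc (m + 1) (m + n)) := by
  rw [boxSE, if_pos hkn] at hchain
  have h := hchain.isBottomChain
  refine eq_inter_Icc_and_eq_Icc_sdiff hkn (image_subset_iff.2 fun i hi => ?_)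
    (image_subset_iff.2 fun i hi => ?_) (image_readingWord_Icc hkn m h)
  · obtain ⟨hi1, hit⟩ := mem_Icc.1 hi
    obtain ⟨h1, h2, -, -⟩ := (h.mem i hi1 hit).1
    exact mem_Icc.2 ⟨h1, h2⟩
  · obtain ⟨hi1, hit⟩ := mem_Icc.1 hi
    exact mem_Icc.2 ⟨(h.mem i hi1 hit).1.2.2.1, h.Y_le hi1 hit⟩

/-- Let `col` be an `m × n` Cauchon diagram with associated permutation `v`, let
`k ∈ {1,...,n}`, put `I_k = v({1,...,k})`, and let `(X 1, Y 1),...,(X t, Y t)` be the chain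
rooted at box `k` on the south-east border.  Then `{X 1,...,X t} = p₁(I_k)` and
`{Y 1,...,Y t} = {m+1,...,m+k} \ p₂(I_k)`. -/
theorem chain_at_boxSE_rows_cols_low
    (m n : ℕ) (hm : 2 ≤ m) (hn : 2 ≤ n)
    (col : ℕ × ℕ → Bool) (hC : IsCauchon m n col)
    (k : ℕ) (hk1 : 1 ≤ k) (hkn : k ≤ n)
    (t : ℕ) (X Y : ℕ → ℕ)
    (hchain : IsChainRootedAt m n col (boxSE m n k).1 (boxSE m n k).2 t X Y) :
    Finset.image X (Finset.Icc 1 t) =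
      Finset.image (fun j => assocPerm m n col j) (Finset.Icc 1 k) ∩ Finset.Icc 1 m ∧
    Finset.image Y (Finset.Icc 1 t) =
      Finset.Icc (m + 1) (m + k) \
        (Finset.image (fun j => assocPerm m n col j) (Finset.Icc 1 k) ∩
          Finset.Icc (m + 1) (m + n)) :=
  chain_at_boxSE_rows_cols_low_general m n col k hkn t X Y hchain
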